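/- arXiv:1909.03846 — 2 statements merged into one kernel-verified Lean document; each statement's English description precedes it below -/
import Mathlib

section
/- Let m ≥ 1 and i ≥ 2 be integers and fix a real s > 1. Let (Ω, F, ℙ) be a probability space with a filtration (F_t)_{t≥i} and let (d_t)_{t≥i} be an adapted, integrable, nonnegative process such that for every t ≥ i, E[d_{t+1} | F_t] = d_t·(1 - e_t) + m·c_t almost surely. Then: (a) the series ∑_{k=t}^{∞} c_k / ( ∑_{l=i}^{k-1} ln(1 + c_l) )^s converges for every t ≥ i+1; and (b) the process S_t := d_t / ( ∑_{l=i}^{t-1} ln(1 + c_l) )^s + m·∑_{k=t}^{∞} c_k / ( ∑_{l=i}^{k-1} ln(1 + c_l) )^s, for t ≥ i+1, is a nonnegative supermartingale with respect to (F_t), and hence converges almost surely to a nonnegative integrable random variable. -/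
open Filter MeasureTheory

/-- `c_l = (2ml+1)/(l(2ml+1-2m))`. -/
noncomputable def cPAAPA (m l : ℕ) : ℝ :=
  (2 * (m : ℝ) * l + 1) / ((l : ℝ) * (2 * (m : ℝ) * l + 1 - 2 * m))

/-- `e_l = m/(l(2ml+1-2m))`. -/
noncomputable def ePAAPA (m l : ℕ) : ℝ :=
  (m : ℝ) / ((l : ℝ) * (2 * (m : ℝ) * l + 1 - 2 * m))

/-!
Write `A_t = ∑_{l=i}^{t-1} log (1 + c_l)`. For `l ≥ 2` we have `0 < c_l ≤ 1`, so the increments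
`log (1 + c_l)` of `A` are bounded by `log 2` and dominate `c_l / 2`; hence `A_{k+1} / A_k` is
bounded and `c_k / A_k ^ s` is dominated by a telescoping difference
`C (A_k ^ (1-s) - A_{k+1} ^ (1-s))`, which gives (a). Since `e_t ≥ 0` and `d_t ≥ 0`,
`E[d_{t+1} | F_t] ≤ d_t + m c_t`; dividing by `A_{t+1} ^ s ≥ A_t ^ s`, the drift `m c_t / A_t ^ s`
is exactly the term the tail sum loses from `t` to `t + 1`, so `S` is a supermartingale. Being
nonnegative it is bounded in `L¹`, and the martingale convergence theorem applies.
-/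

theorem sub_div_rpow_le_rpow_one_sub_sub_rpow_one_sub {a b s : ℝ} (ha : 0 < a) (hab : a ≤ b)
    (hs : 1 ≤ s) : (s - 1) * (b - a) / b ^ s ≤ a ^ (1 - s) - b ^ (1 - s) := by
  have hb : 0 < b := ha.trans_le hab
  obtain ⟨u, hu1, rfl⟩ : ∃ u, 1 ≤ u ∧ b = a * u :=
    ⟨b / a, (one_le_div ha).2 hab, by field_simp⟩
  -- Bernoulli's inequality; the claim is equivalent to it after scaling by `(a * u) ^ s / a`
  have hbern : 1 + s * (u - 1) ≤ u ^ s := by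
    simpa using one_add_mul_self_le_rpow_one_add (by linarith : -1 ≤ u - 1) hs
  have hrhs : a ^ (1 - s) - (a * u) ^ (1 - s) = (a * u ^ s - a * u) / (a * u) ^ s := by
    rw [Real.rpow_sub ha, Real.rpow_sub hb, Real.rpow_one, Real.rpow_one,
      Real.mul_rpow ha.le (by linarith)]
    field_simp
  rw [hrhs, div_le_div_iff_of_pos_right (Real.rpow_pos_of_pos hb s)]
  nlinarith

theorem summable_of_nonneg_of_le_sub_succ {f u : ℕ → ℝ} (hf : ∀ k, 0 ≤ f k)
    (hu : ∀ k, 0 ≤ u k) (hfu : ∀ k, f k ≤ u k - u (k + 1)) : Summable f :=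
  summable_of_sum_range_le hf fun n =>
    calc ∑ k ∈ Finset.range n, f k ≤ ∑ k ∈ Finset.range n, (u k - u (k + 1)) :=
          Finset.sum_le_sum fun k _ => hfu k
      _ = u 0 - u n := Finset.sum_range_sub' u n
      _ ≤ u 0 := sub_le_self _ (hu n)

theorem summable_sub_div_rpow_of_sub_le {A : ℕ → ℝ} {D s : ℝ} (hs : 1 < s) (hA0 : 0 < A 0)
    (hA : Monotone A) (hD : ∀ k, A (k + 1) - A k ≤ D) :
    Summable fun k => (A (k + 1) - A k) / A k ^ s := by
  have hApos : ∀ k, 0 < A k := fun k => hA0.trans_le (hA k.zero_le)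
  have hD0 : 0 ≤ D := (sub_nonneg.2 (hA (Nat.le_succ 0))).trans (hD 0)
  set R := 1 + D / A 0
  have hR : 0 < R := by positivity
  have hratio : ∀ k, A (k + 1) ≤ R * A k := fun k => by
    have : D ≤ D / A 0 * A k := by
      rw [div_mul_eq_mul_div, le_div_iff₀ hA0]
      exact mul_le_mul_of_nonneg_left (hA k.zero_le) hD0
    linarith [hD k]
  refine summable_of_nonneg_of_le_sub_succ (u := fun k => R ^ s / (s - 1) * A k ^ (1 - s))
    (fun k => div_nonneg (sub_nonneg.2 (hA k.le_succ)) (Real.rpow_pos_of_pos (hApos k) s).le)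
    (fun k => mul_nonneg (div_nonneg (Real.rpow_nonneg hR.le s) (by linarith))
      (Real.rpow_nonneg (hApos k).le _)) fun k => ?_
  have hpow : A (k + 1) ^ s ≤ R ^ s * A k ^ s := by
    rw [← Real.mul_rpow hR.le (hApos k).le]
    exact Real.rpow_le_rpow (hApos _).le (hratio k) (by linarith)
  calc (A (k + 1) - A k) / A k ^ s
      = R ^ s * ((A (k + 1) - A k) / (R ^ s * A k ^ s)) := by
        field_simp
    _ ≤ R ^ s * ((A (k + 1) - A k) / A (k + 1) ^ s) := by
        gcongr
        · exact sub_nonneg.2 (hA k.le_succ)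
        · exact Real.rpow_pos_of_pos (hApos _) s
    _ ≤ R ^ s / (s - 1) * (A k ^ (1 - s) - A (k + 1) ^ (1 - s)) := by
        rw [div_mul_eq_mul_div, le_div_iff₀ (by linarith), mul_assoc]
        gcongr
        rw [mul_comm, ← mul_div_assoc]
        exact sub_div_rpow_le_rpow_one_sub_sub_rpow_one_sub (hApos k) (hA k.le_succ) hs.le
    _ = _ := by ring

section PAAPA

variable {m l : ℕ}

theorem paapa_denom_pos (hl : 1 ≤ l) : 0 < (l : ℝ) * (2 * (m : ℝ) * l + 1 - 2 * m) := by
  have hl' : (1 : ℝ) ≤ l := by exact_mod_cast hl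
  have : 0 ≤ 2 * (m : ℝ) * (l - 1) := by positivity
  nlinarith

theorem cPAAPA_pos (hl : 1 ≤ l) : 0 < cPAAPA m l :=
  div_pos (by positivity) (paapa_denom_pos hl)

theorem cPAAPA_le_one (hl : 2 ≤ l) : cPAAPA m l ≤ 1 := by
  have hl' : (2 : ℝ) ≤ l := by exact_mod_cast hl
  rw [cPAAPA, div_le_one (paapa_denom_pos (by omega))]
  have : 0 ≤ 2 * (m : ℝ) * l * (l - 2) := by
    have : (0 : ℝ) ≤ l - 2 := by linarith
    positivity
  nlinarith

theorem ePAAPA_nonneg (hl : 1 ≤ l) : 0 ≤ ePAAPA m l :=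
  div_nonneg m.cast_nonneg (paapa_denom_pos hl).le

end PAAPA

noncomputable def sumLogOneAddC (m i t : ℕ) : ℝ := ∑ l ∈ Finset.Ico i t, Real.log (1 + cPAAPA m l)

section SumLog

variable {m i : ℕ}

theorem sumLogOneAddC_succ {t : ℕ} (ht : i ≤ t) :
    sumLogOneAddC m i (t + 1) = sumLogOneAddC m i t + Real.log (1 + cPAAPA m t) :=
  Finset.sum_Ico_succ_top ht _

theorem log_one_add_cPAAPA_pos {l : ℕ} (hl : 1 ≤ l) : 0 < Real.log (1 + cPAAPA m l) :=
  Real.log_pos (by linarith [cPAAPA_pos (m := m) hl])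

theorem monotone_sumLogOneAddC (hi : 1 ≤ i) : Monotone (sumLogOneAddC m i) := fun _ _ h =>
  Finset.sum_le_sum_of_subset_of_nonneg (Finset.Ico_subset_Ico_right h) fun _ hl _ =>
    (log_one_add_cPAAPA_pos (hi.trans (Finset.mem_Ico.1 hl).1)).le

theorem sumLogOneAddC_pos (hi : 1 ≤ i) {t : ℕ} (ht : i + 1 ≤ t) : 0 < sumLogOneAddC m i t := by
  have : sumLogOneAddC m i (i + 1) = Real.log (1 + cPAAPA m i) := by
    rw [sumLogOneAddC, Nat.Ico_succ_singleton, Finset.sum_singleton]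
  exact (this ▸ log_one_add_cPAAPA_pos hi).trans_le (monotone_sumLogOneAddC hi ht)

theorem cPAAPA_le_two_mul_log {l : ℕ} (hl : 2 ≤ l) :
    cPAAPA m l ≤ 2 * Real.log (1 + cPAAPA m l) := by
  have hc := cPAAPA_pos (m := m) (by omega : 1 ≤ l)
  have hc1 := cPAAPA_le_one (m := m) hl
  have h := Real.le_log_one_add_of_nonneg hc.le
  rw [div_le_iff₀ (by linarith)] at h
  nlinarith

theorem summable_cPAAPA_div_sumLogOneAddC_rpow (hi : 2 ≤ i) {s : ℝ} (hs : 1 < s) {t : ℕ}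
    (ht : i + 1 ≤ t) :
    Summable fun k => cPAAPA m (t + k) / sumLogOneAddC m i (t + k) ^ s := by
  have hinc : ∀ k, sumLogOneAddC m i (t + (k + 1)) - sumLogOneAddC m i (t + k) =
      Real.log (1 + cPAAPA m (t + k)) := fun k => by
    rw [← add_assoc, sumLogOneAddC_succ (by omega)]; ring
  have hsum := summable_sub_div_rpow_of_sub_le (A := fun k => sumLogOneAddC m i (t + k))
    (D := Real.log 2) hs    (sumLogOneAddC_pos (by omega) ht)
    ((monotone_sumLogOneAddC (by omega)).comp fun _ _ h => Nat.add_le_add_left h t)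
    fun k => by
      rw [hinc]
      exact Real.log_le_log (by linarith [cPAAPA_pos (m := m) (by omega : 1 ≤ t + k)])
        (by linarith [cPAAPA_le_one (m := m) (by omega : 2 ≤ t + k)])
  refine Summable.of_nonneg_of_le (fun k => ?_) (fun k => ?_) (hsum.mul_left 2)
  · exact div_nonneg (cPAAPA_pos (by omega)).le
      (Real.rpow_nonneg (sumLogOneAddC_pos (by omega) (by omega)).le _)
  · rw [hinc, ← mul_div_assoc]
    exact div_le_div_of_nonneg_right (cPAAPA_le_two_mul_log (by omega : 2 ≤ t + k))
      (Real.rpow_nonneg (sumLogOneAddC_pos (by omega) (by omega)).le _)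

end SumLog

noncomputable def scaledAddTail {Ω : Type*} (d : ℕ → Ω → ℝ) (w c : ℕ → ℝ) (a : ℝ) (t : ℕ)
    (ω : Ω) : ℝ :=
  d t ω / w t + a * ∑' k, c (t + k) / w (t + k)

theorem tsum_nat_add_eq_add_tsum_succ_add {f : ℕ → ℝ} {t : ℕ} (hf : Summable fun k => f (t + k)) :
    ∑' k, f (t + k) = f t + ∑' k, f (t + 1 + k) := by
  rw [hf.tsum_eq_zero_add]
  simp only [add_zero, add_right_comm t, add_assoc]

section ScaledAddTail

variable {Ω : Type*} {m0 : MeasurableSpace Ω} {μ : Measure Ω} {d : ℕ → Ω → ℝ} {w c : ℕ → ℝ}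
  {a : ℝ} {t : ℕ}

theorem integrable_scaledAddTail [IsFiniteMeasure μ] (hd : Integrable (d t) μ) :
    Integrable (scaledAddTail d w c a t) μ :=
  (hd.div_const _).add (integrable_const _)

theorem stronglyMeasurable_scaledAddTail {m : MeasurableSpace Ω} (hd : Measurable[m] (d t)) :
    StronglyMeasurable[m] (scaledAddTail d w c a t) :=
  (hd.div_const _).stronglyMeasurable.add stronglyMeasurable_const

theorem scaledAddTail_nonneg (hd : 0 ≤ᵐ[μ] d t) (hw : ∀ k, t ≤ k → 0 < w k)
    (hc : ∀ k, t ≤ k → 0 ≤ c k) (ha : 0 ≤ a) : 0 ≤ᵐ[μ] scaledAddTail d w c a t := by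
  filter_upwards [hd] with ω hω
  exact add_nonneg (div_nonneg hω (hw t le_rfl).le) (mul_nonneg ha (tsum_nonneg fun k =>
    div_nonneg (hc _ (Nat.le_add_right t k)) (hw _ (Nat.le_add_right t k)).le))

theorem condExp_div_const_add_const [IsFiniteMeasure μ] {m : MeasurableSpace Ω} (hm : m ≤ m0)
    {f : Ω → ℝ} (hf : Integrable f μ) (r K : ℝ) :
    μ[fun ω => f ω / r + K | m] =ᵐ[μ] fun ω => μ[f | m] ω / r + K := by
  have h : (fun ω => f ω / r + K) = r⁻¹ • f + fun _ => K := by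
    ext ω; simp [div_eq_inv_mul]
  filter_upwards [condExp_add (hf.smul r⁻¹) (integrable_const K) m, condExp_smul r⁻¹ f m]
    with ω hadd hsmul
  rw [h, hadd, Pi.add_apply, hsmul, condExp_const hm]
  simp [div_eq_inv_mul]

theorem condExp_scaledAddTail_succ_le [IsFiniteMeasure μ] {m : MeasurableSpace Ω} (hm : m ≤ m0)
    (hd : Integrable (d (t + 1)) μ) (hdt : 0 ≤ᵐ[μ] d t) (hw : 0 < w t) (hwt : w t ≤ w (t + 1))
    (ha : 0 ≤ a) (hc : 0 ≤ c t) (hsum : Summable fun k => c (t + k) / w (t + k))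
    (hcond : μ[d (t + 1) | m] ≤ᵐ[μ] fun ω => d t ω + a * c t) :
    μ[scaledAddTail d w c a (t + 1) | m] ≤ᵐ[μ] scaledAddTail d w c a t := by
  unfold scaledAddTail
  filter_upwards [condExp_div_const_add_const hm hd (w (t + 1))
    (a * ∑' k, c (t + 1 + k) / w (t + 1 + k)), hcond, hdt] with ω hω hcondω hdω
  have hdrift : 0 ≤ d t ω + a * c t := add_nonneg hdω (mul_nonneg ha hc)
  calc _ = μ[d (t + 1) | m] ω / w (t + 1) + a * ∑' k, c (t + 1 + k) / w (t + 1 + k) := hω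
    _ ≤ (d t ω + a * c t) / w t + a * ∑' k, c (t + 1 + k) / w (t + 1 + k) := by
        gcongr ?_ + _
        exact (div_le_div_of_nonneg_right hcondω (hw.trans_le hwt).le).trans
          (div_le_div_of_nonneg_left hdrift hw hwt)
    _ = _ := by
        rw [tsum_nat_add_eq_add_tsum_succ_add (f := fun k => c k / w k) hsum]
        ring

end ScaledAddTail

def MeasureTheory.Filtration.shift {Ω : Type*} {m0 : MeasurableSpace Ω} (ℱ : Filtration ℕ m0)
    (n₀ : ℕ) : Filtration ℕ m0 where
  seq n := ℱ (n₀ + n)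
  mono' _ _ h := ℱ.mono (Nat.add_le_add_left h n₀)
  le' _ := ℱ.le _

section Convergence

variable {Ω : Type*} {m0 : MeasurableSpace Ω} {μ : Measure Ω} [IsFiniteMeasure μ]
  {ℱ : Filtration ℕ m0} {f : ℕ → Ω → ℝ}

theorem MeasureTheory.Supermartingale.eLpNorm_one_le_of_nonneg (hf : Supermartingale f ℱ μ)
    (hnn : ∀ n, 0 ≤ᵐ[μ] f n) (n : ℕ) :
    eLpNorm (f n) 1 μ ≤ ENNReal.ofReal (∫ ω, f 0 ω ∂μ) := by
  rw [eLpNorm_one_eq_lintegral_enorm, ← ofReal_integral_norm_eq_lintegral_enorm (hf.integrable n),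
    integral_congr_ae ((hnn n).mono fun ω hω => Real.norm_of_nonneg hω)]
  refine ENNReal.ofReal_le_ofReal ?_
  simpa using hf.setIntegral_le n.zero_le MeasurableSet.univ

theorem MeasureTheory.Supermartingale.exists_ae_tendsto_of_nonneg (hf : Supermartingale f ℱ μ)
    (hnn : ∀ n, 0 ≤ᵐ[μ] f n) :
    ∃ X : Ω → ℝ, Integrable X μ ∧
      ∀ᵐ ω ∂μ, 0 ≤ X ω ∧ Tendsto (fun n => f n ω) atTop (nhds (X ω)) := by
  have hbdd : ∀ n, eLpNorm ((-f) n) 1 μ ≤ (∫ ω, f 0 ω ∂μ).toNNReal := fun n => by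
    rw [Pi.neg_apply, eLpNorm_neg]
    exact hf.eLpNorm_one_le_of_nonneg hnn n
  refine ⟨-(ℱ.limitProcess (-f) μ),
    (memLp_one_iff_integrable.1 (hf.neg.memLp_limitProcess hbdd)).neg, ?_⟩
  filter_upwards [hf.neg.ae_tendsto_limitProcess hbdd, ae_all_iff.2 hnn] with ω hω hωnn
  have hlim : Tendsto (fun n => f n ω) atTop (nhds (-(ℱ.limitProcess (-f) μ) ω)) := by
    simpa using hω.neg
  exact ⟨ge_of_tendsto' hlim hωnn, hlim⟩

end Convergence

theorem pa_apa_pure_anti_supermartingale_general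
    {Ω : Type*} {m0 : MeasurableSpace Ω} (μ : Measure Ω) [IsProbabilityMeasure μ]
    (ℱ : Filtration ℕ m0) (m i : ℕ) (hi : 2 ≤ i)
    (s : ℝ) (hs : 1 < s)
    (d : ℕ → Ω → ℝ) (hadapted : Adapted ℱ d)
    (hint : ∀ t, Integrable (d t) μ)
    (hnonneg : ∀ t, 0 ≤ᵐ[μ] d t)
    (hcond : ∀ t, i ≤ t →
      μ[d (t + 1) | ℱ t] =ᵐ[μ]
        fun ω => d t ω * (1 - ePAAPA m t) + (m : ℝ) * cPAAPA m t) :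
    (∀ t, i + 1 ≤ t →
      Summable (fun k : ℕ =>
        cPAAPA m (t + k) /
          (∑ l ∈ Finset.Ico i (t + k), Real.log (1 + cPAAPA m l)) ^ s)) ∧
    ((∀ t, i + 1 ≤ t →
        (0 ≤ᵐ[μ] fun ω =>
          d t ω / (∑ l ∈ Finset.Ico i t, Real.log (1 + cPAAPA m l)) ^ s
            + (m : ℝ) * ∑' k : ℕ, cPAAPA m (t + k) /
                (∑ l ∈ Finset.Ico i (t + k), Real.log (1 + cPAAPA m l)) ^ s) ∧
        Integrable (fun ω =>
          d t ω / (∑ l ∈ Finset.Ico i t, Real.log (1 + cPAAPA m l)) ^ s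
            + (m : ℝ) * ∑' k : ℕ, cPAAPA m (t + k) /
                (∑ l ∈ Finset.Ico i (t + k), Real.log (1 + cPAAPA m l)) ^ s) μ ∧
        StronglyMeasurable[ℱ t] (fun ω =>
          d t ω / (∑ l ∈ Finset.Ico i t, Real.log (1 + cPAAPA m l)) ^ s
            + (m : ℝ) * ∑' k : ℕ, cPAAPA m (t + k) /
                (∑ l ∈ Finset.Ico i (t + k), Real.log (1 + cPAAPA m l)) ^ s) ∧
        μ[fun ω =>
            d (t + 1) ω / (∑ l ∈ Finset.Ico i (t + 1), Real.log (1 + cPAAPA m l)) ^ s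
              + (m : ℝ) * ∑' k : ℕ, cPAAPA m (t + 1 + k) /
                  (∑ l ∈ Finset.Ico i (t + 1 + k), Real.log (1 + cPAAPA m l)) ^ s
          | ℱ t] ≤ᵐ[μ]
          fun ω =>
            d t ω / (∑ l ∈ Finset.Ico i t, Real.log (1 + cPAAPA m l)) ^ s
              + (m : ℝ) * ∑' k : ℕ, cPAAPA m (t + k) /
                  (∑ l ∈ Finset.Ico i (t + k), Real.log (1 + cPAAPA m l)) ^ s) ∧
      ∃ X : Ω → ℝ, Integrable X μ ∧
        ∀ᵐ ω ∂μ, 0 ≤ X ω ∧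
          Tendsto (fun t : ℕ =>
              d t ω / (∑ l ∈ Finset.Ico i t, Real.log (1 + cPAAPA m l)) ^ s
                + (m : ℝ) * ∑' k : ℕ, cPAAPA m (t + k) /
                    (∑ l ∈ Finset.Ico i (t + k), Real.log (1 + cPAAPA m l)) ^ s)
            atTop (nhds (X ω))) := by
  have hA : ∀ t, i + 1 ≤ t → 0 < sumLogOneAddC m i t := fun t ht =>
    sumLogOneAddC_pos (by omega) ht
  have hsum : ∀ t, i + 1 ≤ t →
      Summable fun k => cPAAPA m (t + k) / sumLogOneAddC m i (t + k) ^ s :=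
    fun t ht => summable_cPAAPA_div_sumLogOneAddC_rpow hi hs ht
  set S := scaledAddTail d (fun t => sumLogOneAddC m i t ^ s) (cPAAPA m) m
  have hnn : ∀ t, i + 1 ≤ t → 0 ≤ᵐ[μ] S t := fun t ht =>
    scaledAddTail_nonneg (hnonneg t) (fun k hk => Real.rpow_pos_of_pos (hA k (ht.trans hk)) s)
      (fun k hk => (cPAAPA_pos (by omega)).le) m.cast_nonneg
  have hdrift : ∀ t, i ≤ t → μ[d (t + 1) | ℱ t] ≤ᵐ[μ] fun ω => d t ω + m * cPAAPA m t :=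
    fun t ht => (hcond t ht).trans_le <| (hnonneg t).mono fun ω hω => by
      have := ePAAPA_nonneg (m := m) (by omega : 1 ≤ t)
      simp only [Pi.zero_apply] at hω
      nlinarith
  have hstep : ∀ t, i + 1 ≤ t → μ[S (t + 1) | ℱ t] ≤ᵐ[μ] S t := fun t ht =>
    condExp_scaledAddTail_succ_le (ℱ.le t) (hint _) (hnonneg t)
      (Real.rpow_pos_of_pos (hA t ht) s)
      (Real.rpow_le_rpow (hA t ht).le (monotone_sumLogOneAddC (by omega) t.le_succ) (by linarith))
      m.cast_nonneg (cPAAPA_pos (by omega)).le (hsum t ht) (hdrift t (by omega))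
  have hintS : ∀ t, Integrable (S t) μ := fun t => integrable_scaledAddTail (hint t)
  have hmeasS : ∀ t, StronglyMeasurable[ℱ t] (S t) := fun t =>
    stronglyMeasurable_scaledAddTail (hadapted t)
  have hsuper : Supermartingale (fun n => S (i + 1 + n)) (ℱ.shift (i + 1)) μ :=
    supermartingale_nat (fun n => hmeasS _) (fun n => hintS _) fun n => hstep _ (by omega)
  obtain ⟨X, hX, hlim⟩ := hsuper.exists_ae_tendsto_of_nonneg fun n => hnn _ (by omega)
  refine ⟨hsum, fun t ht => ⟨hnn t ht, hintS t, hmeasS t, hstep t ht⟩, X, hX, ?_⟩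
  filter_upwards [hlim] with ω hω
  refine ⟨hω.1, (tendsto_add_atTop_iff_nat (f := fun t => S t ω) (i + 1)).1 ?_⟩
  simp_rw [Nat.add_comm _ (i + 1)]
  exact hω.2

/-- The supermartingale construction in the proof of Theorem 3.9 of the paper:
(a) the series `∑_{k=t}^{∞} c_k / (∑_{l=i}^{k-1} ln(1+c_l))^s` converges for every
`t ≥ i+1`, and (b) the process
`S_t = d_t / (∑_{l=i}^{t-1} ln(1+c_l))^s + m ∑_{k=t}^{∞} c_k / (∑_{l=i}^{k-1} ln(1+c_l))^s`
is a nonnegative supermartingale, hence converges almost surely to a nonnegative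
integrable random variable. -/
theorem pa_apa_pure_anti_supermartingale
    {Ω : Type*} {m0 : MeasurableSpace Ω} (μ : Measure Ω) [IsProbabilityMeasure μ]
    (ℱ : Filtration ℕ m0) (m i : ℕ) (hm : 1 ≤ m) (hi : 2 ≤ i)
    (s : ℝ) (hs : 1 < s)
    (d : ℕ → Ω → ℝ) (hadapted : Adapted ℱ d)
    (hint : ∀ t, Integrable (d t) μ)
    (hnonneg : ∀ t, 0 ≤ᵐ[μ] d t)
    (hcond : ∀ t, i ≤ t →
      μ[d (t + 1) | ℱ t] =ᵐ[μ]
        fun ω => d t ω * (1 - ePAAPA m t) + (m : ℝ) * cPAAPA m t) :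
    (∀ t, i + 1 ≤ t →
      Summable (fun k : ℕ =>
        cPAAPA m (t + k) /
          (∑ l ∈ Finset.Ico i (t + k), Real.log (1 + cPAAPA m l)) ^ s)) ∧
    ((∀ t, i + 1 ≤ t →
        (0 ≤ᵐ[μ] fun ω =>
          d t ω / (∑ l ∈ Finset.Ico i t, Real.log (1 + cPAAPA m l)) ^ s
            + (m : ℝ) * ∑' k : ℕ, cPAAPA m (t + k) /
                (∑ l ∈ Finset.Ico i (t + k), Real.log (1 + cPAAPA m l)) ^ s) ∧
        Integrable (fun ω =>
          d t ω / (∑ l ∈ Finset.Ico i t, Real.log (1 + cPAAPA m l)) ^ s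
            + (m : ℝ) * ∑' k : ℕ, cPAAPA m (t + k) /
                (∑ l ∈ Finset.Ico i (t + k), Real.log (1 + cPAAPA m l)) ^ s) μ ∧
        StronglyMeasurable[ℱ t] (fun ω =>
          d t ω / (∑ l ∈ Finset.Ico i t, Real.log (1 + cPAAPA m l)) ^ s
            + (m : ℝ) * ∑' k : ℕ, cPAAPA m (t + k) /
                (∑ l ∈ Finset.Ico i (t + k), Real.log (1 + cPAAPA m l)) ^ s) ∧
        μ[fun ω =>
            d (t + 1) ω / (∑ l ∈ Finset.Ico i (t + 1), Real.log (1 + cPAAPA m l)) ^ s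
              + (m : ℝ) * ∑' k : ℕ, cPAAPA m (t + 1 + k) /
                  (∑ l ∈ Finset.Ico i (t + 1 + k), Real.log (1 + cPAAPA m l)) ^ s
          | ℱ t] ≤ᵐ[μ]
          fun ω =>
            d t ω / (∑ l ∈ Finset.Ico i t, Real.log (1 + cPAAPA m l)) ^ s
              + (m : ℝ) * ∑' k : ℕ, cPAAPA m (t + k) /
                  (∑ l ∈ Finset.Ico i (t + k), Real.log (1 + cPAAPA m l)) ^ s) ∧
      ∃ X : Ω → ℝ, Integrable X μ ∧
        ∀ᵐ ω ∂μ, 0 ≤ X ω ∧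
          Tendsto (fun t : ℕ =>
              d t ω / (∑ l ∈ Finset.Ico i t, Real.log (1 + cPAAPA m l)) ^ s
                + (m : ℝ) * ∑' k : ℕ, cPAAPA m (t + k) /
                    (∑ l ∈ Finset.Ico i (t + k), Real.log (1 + cPAAPA m l)) ^ s)
            atTop (nhds (X ω))) :=
  pa_apa_pure_anti_supermartingale_general μ ℱ m i hi s hs d hadapted hint hnonneg hcond
end

section
/- Let m ≥ 1 and i ≥ 1 be integers. Let (Ω, F, ℙ) be a probability space with a filtration (F_t)_{t≥i} and let (d_t)_{t≥i} be an adapted, nonnegative process with d_t ≤ 2mt almost surely for every t ≥ i, and such that for every t ≥ i, E[exp(d_{t+1} - d_t) | F_t] ≤ (1 + (e - 1)·c_t)^m almost surely, where e is Euler's number. Then limsup_{t→∞} d_t / ln t < ∞ almost surely. -/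
/-!
Conditioning on `ℱ t` multiplies the exponential moment `E[exp d_t]` by at most
`(1 + (e - 1) c_t)^m ≤ exp (K / t)` with `K = m (e - 1) (2m + 1)`, since `c_t ≤ (2m + 1) / t`.
Summing the harmonic series, `E[exp d_t] ≤ C t^K`. The Chernoff bound then gives
`P(d_t ≥ (K + 2) ln t) ≤ C / t²`, which is summable, so by Borel–Cantelli almost surely
`d_t < (K + 2) ln t` for all large `t`.
-/

open Filter MeasureTheory ProbabilityTheory Real Finset

lemma cPAAPA_denom_eq (m l : ℕ) :
    (l : ℝ) * (2 * (m : ℝ) * l + 1 - 2 * m) = l * (2 * m * (l - 1) + 1) := by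
  ring

lemma cPAAPA_nonneg (m l : ℕ) : 0 ≤ cPAAPA m l := by
  unfold cPAAPA
  rw [cPAAPA_denom_eq]
  rcases Nat.eq_zero_or_pos l with rfl | hl
  · simp
  · have hl' : (1 : ℝ) ≤ l := by exact_mod_cast hl
    have : (0 : ℝ) ≤ 2 * m * (l - 1) := by have := sub_nonneg.2 hl'; positivity
    positivity

lemma cPAAPA_le (m l : ℕ) : cPAAPA m l ≤ (2 * m + 1) / l := by
  unfold cPAAPA
  rw [cPAAPA_denom_eq]
  rcases Nat.eq_zero_or_pos l with rfl | hl
  · simp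
  have hl' : (1 : ℝ) ≤ l := by exact_mod_cast hl
  have hlm : (0 : ℝ) ≤ 2 * m * (l - 1) := by have := sub_nonneg.2 hl'; positivity
  rw [div_le_div_iff₀ (by positivity) (by positivity)]
  have : (0 : ℝ) ≤ 2 * m * (l - 1) * (2 * m) * l := by positivity
  nlinarith

lemma one_add_pow_le_exp_mul {x : ℝ} (hx : -1 ≤ x) (n : ℕ) : (1 + x) ^ n ≤ exp (n * x) := by
  rw [exp_nat_mul]
  exact pow_le_pow_left₀ (by linarith) (by linarith [add_one_le_exp x]) n

lemma sum_Ico_inv_le_one_add_log (i t : ℕ) :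
    ∑ s ∈ Ico i t, (s : ℝ)⁻¹ ≤ 1 + log t := by
  calc ∑ s ∈ Ico i t, (s : ℝ)⁻¹
      ≤ ∑ s ∈ range (t + 1), (s : ℝ)⁻¹ := by
        refine sum_le_sum_of_subset_of_nonneg (fun s hs => ?_) (fun _ _ _ => by positivity)
        simp only [mem_Ico, mem_range] at hs ⊢
        omega
    _ = harmonic t := by simp [harmonic, sum_range_succ']
    _ ≤ 1 + log t := harmonic_le_one_add_log t

lemma exp_one_sub_one_nonneg : 0 ≤ exp 1 - 1 :=
  sub_nonneg.2 (one_le_exp zero_le_one)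

lemma prod_Ico_growth_le (m i t : ℕ) :
    ∏ s ∈ Ico i t, (1 + (exp 1 - 1) * cPAAPA m s) ^ m ≤
      exp (m * (exp 1 - 1) * (2 * m + 1) * (1 + log t)) := by
  have := exp_one_sub_one_nonneg
  calc ∏ s ∈ Ico i t, (1 + (exp 1 - 1) * cPAAPA m s) ^ m
      ≤ ∏ s ∈ Ico i t, exp (m * (exp 1 - 1) * (2 * m + 1) * (s : ℝ)⁻¹) := by
        refine prod_le_prod (fun s _ => by have := cPAAPA_nonneg m s; positivity) fun s _ => ?_
        refine (one_add_pow_le_exp_mul (by have := cPAAPA_nonneg m s; nlinarith) m).trans ?_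
        rw [exp_le_exp, mul_assoc (m * (exp 1 - 1) : ℝ), ← div_eq_mul_inv, ← mul_assoc]
        gcongr
        exact cPAAPA_le m s
    _ = exp (m * (exp 1 - 1) * (2 * m + 1) * ∑ s ∈ Ico i t, (s : ℝ)⁻¹) := by
        rw [← exp_sum, mul_sum]
    _ ≤ exp (m * (exp 1 - 1) * (2 * m + 1) * (1 + log t)) := by
        gcongr
        exact sum_Ico_inv_le_one_add_log i t

lemma le_mul_prod_Ico_of_succ_le {u a : ℕ → ℝ} {i : ℕ} (ha : ∀ t, i ≤ t → 0 ≤ a t)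
    (hu : ∀ t, i ≤ t → u (t + 1) ≤ a t * u t) {t : ℕ} (ht : i ≤ t) :
    u t ≤ u i * ∏ s ∈ Ico i t, a s := by
  induction t, ht using Nat.le_induction with
  | base => simp
  | succ t ht ih =>
    calc u (t + 1) ≤ a t * u t := hu t ht
      _ ≤ a t * (u i * ∏ s ∈ Ico i t, a s) := mul_le_mul_of_nonneg_left ih (ha t ht)
      _ = u i * ∏ s ∈ Ico i (t + 1), a s := by rw [prod_Ico_succ_top ht]; ring

section Moments

variable {Ω : Type*} {m0 : MeasurableSpace Ω} {μ : Measure Ω} [IsFiniteMeasure μ]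

lemma integrable_exp_of_ae_le {X : Ω → ℝ} (hX : AEStronglyMeasurable X μ) {b : ℝ}
    (hb : ∀ᵐ ω ∂μ, X ω ≤ b) : Integrable (fun ω => exp (X ω)) μ := by
  refine Integrable.of_bound (continuous_exp.comp_aestronglyMeasurable hX) (exp b) ?_
  filter_upwards [hb] with ω h
  rw [norm_of_nonneg (exp_pos _).le]
  exact exp_le_exp.2 h

lemma integrable_exp_sub_of_ae_le {X Y : Ω → ℝ} (hX : AEStronglyMeasurable X μ)
    (hY : AEStronglyMeasurable Y μ) (hX0 : 0 ≤ᵐ[μ] X) {b : ℝ}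
    (hb : ∀ᵐ ω ∂μ, Y ω ≤ b) :
    Integrable (fun ω => exp (Y ω - X ω)) μ := by
  refine integrable_exp_of_ae_le (hY.sub hX) (b := b) ?_
  filter_upwards [hX0, hb] with ω hX0 hb
  linarith [show 0 ≤ X ω from hX0]

lemma integral_mul_le_of_condExp_le {m : MeasurableSpace Ω} (hm : m ≤ m0) {f g : Ω → ℝ}
    {c : ℝ} (hf : StronglyMeasurable[m] f) (hf0 : 0 ≤ f) (hfi : Integrable f μ)
    (hg : Integrable g μ) (hfg : Integrable (f * g) μ) (hgc : μ[g | m] ≤ᵐ[μ] fun _ => c) :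
    ∫ ω, (f * g) ω ∂μ ≤ c * ∫ ω, f ω ∂μ := by
  rw [← integral_condExp hm, ← integral_const_mul]
  refine integral_mono_ae integrable_condExp (hfi.const_mul c) ?_
  filter_upwards [condExp_mul_of_stronglyMeasurable_left hf hfg hg, hgc] with ω hpull hω
  rw [hpull, Pi.mul_apply, mul_comm c]
  exact mul_le_mul_of_nonneg_left hω (hf0 ω)

lemma integral_exp_le_mul_prod {ℱ : Filtration ℕ m0} {d : ℕ → Ω → ℝ}
    (hd : Adapted ℱ d) {a : ℕ → ℝ} {i : ℕ} (ha : ∀ t, i ≤ t → 0 ≤ a t)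
    (hint : ∀ t, i ≤ t → Integrable (fun ω => exp (d t ω)) μ)
    (hint_incr : ∀ t, i ≤ t → Integrable (fun ω => exp (d (t + 1) ω - d t ω)) μ)
    (hcond : ∀ t, i ≤ t →
      μ[fun ω => exp (d (t + 1) ω - d t ω) | ℱ t] ≤ᵐ[μ] fun _ => a t)
    {t : ℕ} (ht : i ≤ t) :
    ∫ ω, exp (d t ω) ∂μ ≤ (∫ ω, exp (d i ω) ∂μ) * ∏ s ∈ Ico i t, a s := by
  refine le_mul_prod_Ico_of_succ_le (u := fun t => ∫ ω, exp (d t ω) ∂μ) ha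
    (fun t ht => ?_) ht
  have hprod : ((fun ω => exp (d t ω)) * fun ω => exp (d (t + 1) ω - d t ω)) =
      fun ω => exp (d (t + 1) ω) := by
    ext ω
    simp [← exp_add]
  have hstep := integral_mul_le_of_condExp_le (ℱ.le t)
    (hd t).exp.stronglyMeasurable (fun ω => (exp_pos (d t ω)).le)
    (hint t ht) (hint_incr t ht) (hprod ▸ hint (t + 1) (by omega)) (hcond t ht)
  rwa [hprod] at hstep

lemma measureReal_mul_log_le_le_div_sq {X : Ω → ℝ} {C K t : ℝ} (ht : 0 < t)
    (hX : Integrable (fun ω => exp (X ω)) μ) (hmom : ∫ ω, exp (X ω) ∂μ ≤ C * t ^ K) :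
    μ.real {ω | (K + 2) * log t ≤ X ω} ≤ C / t ^ 2 := by
  have hmgf : mgf X μ 1 = ∫ ω, exp (X ω) ∂μ := by simp only [mgf, one_mul]
  calc μ.real {ω | (K + 2) * log t ≤ X ω}
      ≤ exp (-1 * ((K + 2) * log t)) * mgf X μ 1 :=
        measure_ge_le_exp_mul_mgf _ zero_le_one (by simpa using hX)
    _ ≤ exp (-1 * ((K + 2) * log t)) * (C * t ^ K) := by
        rw [hmgf]; exact mul_le_mul_of_nonneg_left hmom (exp_pos _).le
    _ = C / t ^ 2 := by
        rw [rpow_def_of_pos ht, ← exp_log (pow_pos ht 2), log_pow, div_eq_mul_inv, ← exp_neg]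
        rw [mul_left_comm, ← exp_add]
        ring_nf

lemma ae_eventually_lt_mul_log_of_integral_exp_le {X : ℕ → Ω → ℝ} {C K : ℝ}
    (hint : ∀ᶠ t in atTop, Integrable (fun ω => exp (X t ω)) μ)
    (hmom : ∀ᶠ t in atTop, ∫ ω, exp (X t ω) ∂μ ≤ C * (t : ℝ) ^ K) :
    ∀ᵐ ω ∂μ, ∀ᶠ t in atTop, X t ω < (K + 2) * log t := by
  set S : ℕ → Set Ω := fun t => {ω | (K + 2) * log t ≤ X t ω}
  have hsummable : Summable fun t => μ.real (S t) := by
    refine Summable.of_norm_bounded_eventually_nat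
      (((summable_one_div_nat_pow (p := 2)).2 one_lt_two).mul_left C) ?_
    filter_upwards [hint, hmom, eventually_ge_atTop 1] with t hint hmom ht
    rw [norm_of_nonneg measureReal_nonneg, mul_one_div]
    exact measureReal_mul_log_le_le_div_sq (by exact_mod_cast ht) hint hmom
  have hsum : ∑' t, μ (S t) ≠ ⊤ := by
    rw [tsum_congr fun t => (ofReal_measureReal (μ := μ) (s := S t)).symm,
      ← ENNReal.ofReal_tsum_of_nonneg (fun _ => measureReal_nonneg) hsummable]
    exact ENNReal.ofReal_ne_top
  filter_upwards [ae_eventually_notMem hsum] with ω hω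
  simpa [S] using hω

end Moments

lemma integral_exp_le_of_cPAAPA_growth {Ω : Type*} {m0 : MeasurableSpace Ω} {μ : Measure Ω}
    [IsProbabilityMeasure μ] {ℱ : Filtration ℕ m0} {d : ℕ → Ω → ℝ} {m i : ℕ}
    (hd : Adapted ℱ d) (hint : ∀ t, i ≤ t → Integrable (fun ω => exp (d t ω)) μ)
    (hint_incr : ∀ t, i ≤ t → Integrable (fun ω => exp (d (t + 1) ω - d t ω)) μ)
    {b : ℝ} (hinit : ∀ᵐ ω ∂μ, d i ω ≤ b)
    (hcond : ∀ t, i ≤ t → μ[fun ω => exp (d (t + 1) ω - d t ω) | ℱ t] ≤ᵐ[μ]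
        fun _ => (1 + (exp 1 - 1) * cPAAPA m t) ^ m)
    {t : ℕ} (ht : i ≤ t) (ht1 : 1 ≤ t) :
    ∫ ω, exp (d t ω) ∂μ ≤
      exp b * exp (m * (exp 1 - 1) * (2 * m + 1)) *
        (t : ℝ) ^ (m * (exp 1 - 1) * (2 * m + 1)) := by
  set K : ℝ := m * (exp 1 - 1) * (2 * m + 1)
  have hfactor : ∀ s, i ≤ s → 0 ≤ (1 + (exp 1 - 1) * cPAAPA m s) ^ m := fun s _ => by
    have := cPAAPA_nonneg m s; have := exp_one_sub_one_nonneg; positivity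
  have hstart : ∫ ω, exp (d i ω) ∂μ ≤ exp b := by
    refine (integral_mono_ae (hint i le_rfl) (integrable_const (exp b)) ?_).trans (by simp)
    filter_upwards [hinit] with ω h using exp_le_exp.2 h
  calc ∫ ω, exp (d t ω) ∂μ
      ≤ (∫ ω, exp (d i ω) ∂μ) * ∏ s ∈ Ico i t, (1 + (exp 1 - 1) * cPAAPA m s) ^ m :=
        integral_exp_le_mul_prod hd hfactor hint hint_incr hcond ht
    _ ≤ exp b * exp (K * (1 + log t)) :=
        mul_le_mul hstart (prod_Ico_growth_le m i t)
          (prod_nonneg fun s hs => hfactor s (mem_Ico.1 hs).1) (exp_pos _).le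
    _ = exp b * exp K * (t : ℝ) ^ K := by
        rw [rpow_def_of_pos (by exact_mod_cast ht1), ← exp_add, ← exp_add, ← exp_add]
        ring_nf

lemma isBoundedUnder_div_log_of_eventually_le {x : ℕ → ℝ} {c : ℝ}
    (h : ∀ᶠ t in atTop, x t ≤ c * log t) :
    IsBoundedUnder (· ≤ ·) atTop fun t : ℕ => x t / log t := by
  refine isBoundedUnder_of_eventually_le (a := c) ?_
  filter_upwards [h, eventually_ge_atTop 2] with t hle ht
  exact (div_le_iff₀ (log_pos (by exact_mod_cast ht))).2 hle

theorem pa_apa_pure_anti_degree_log_growth_general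
    {Ω : Type*} {m0 : MeasurableSpace Ω} (μ : Measure Ω) [IsProbabilityMeasure μ]
    (ℱ : Filtration ℕ m0) (m i : ℕ)
    (d : ℕ → Ω → ℝ) (hadapted : Adapted ℱ d)
    (hnonneg : ∀ t, i ≤ t → 0 ≤ᵐ[μ] d t)
    (hbound : ∀ t, i ≤ t → ∀ᵐ ω ∂μ, d t ω ≤ 2 * (m : ℝ) * t)
    (hmgf : ∀ t, i ≤ t →
      μ[fun ω => Real.exp (d (t + 1) ω - d t ω) | ℱ t] ≤ᵐ[μ]
        fun _ => (1 + (Real.exp 1 - 1) * cPAAPA m t) ^ m) :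
    ∀ᵐ ω ∂μ,
      IsBoundedUnder (· ≤ ·) atTop (fun t : ℕ => d t ω / Real.log t) := by
  have hmeas : ∀ t, AEStronglyMeasurable (d t) μ :=
    fun t => ((hadapted t).stronglyMeasurable.mono (ℱ.le t)).aestronglyMeasurable
  have hint : ∀ t, i ≤ t → Integrable (fun ω => exp (d t ω)) μ :=
    fun t ht => integrable_exp_of_ae_le (hmeas t) (hbound t ht)
  have hint_incr : ∀ t, i ≤ t → Integrable (fun ω => exp (d (t + 1) ω - d t ω)) μ :=
    fun t ht => integrable_exp_sub_of_ae_le (hmeas t) (hmeas (t + 1)) (hnonneg t ht)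
      (hbound (t + 1) (by omega))
  have hmom := fun t (ht : i ≤ t ∧ 1 ≤ t) => integral_exp_le_of_cPAAPA_growth hadapted hint
    hint_incr (hbound i le_rfl) hmgf ht.1 ht.2
  filter_upwards [ae_eventually_lt_mul_log_of_integral_exp_le
    ((eventually_ge_atTop i).mono hint)
    (((eventually_ge_atTop i).and (eventually_ge_atTop 1)).mono hmom)] with ω hω
  exact isBoundedUnder_div_log_of_eventually_le (hω.mono fun t => le_of_lt)

/-- Theorem 3.10 of the paper: in the pure anti-preferential attachment model
`limsup_{t→∞} d(v_i,t)/ln t < ∞` almost surely, i.e. the sequence `d_t/ln t` is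
almost surely eventually bounded above. -/
theorem pa_apa_pure_anti_degree_log_growth
    {Ω : Type*} {m0 : MeasurableSpace Ω} (μ : Measure Ω) [IsProbabilityMeasure μ]
    (ℱ : Filtration ℕ m0) (m i : ℕ) (hm : 1 ≤ m) (hi : 1 ≤ i)
    (d : ℕ → Ω → ℝ) (hadapted : Adapted ℱ d)
    (hnonneg : ∀ t, i ≤ t → 0 ≤ᵐ[μ] d t)
    (hbound : ∀ t, i ≤ t → ∀ᵐ ω ∂μ, d t ω ≤ 2 * (m : ℝ) * t)
    (hmgf : ∀ t, i ≤ t →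
      μ[fun ω => Real.exp (d (t + 1) ω - d t ω) | ℱ t] ≤ᵐ[μ]
        fun _ => (1 + (Real.exp 1 - 1) * cPAAPA m t) ^ m) :
    ∀ᵐ ω ∂μ,
      IsBoundedUnder (· ≤ ·) atTop (fun t : ℕ => d t ω / Real.log t) :=
  pa_apa_pure_anti_degree_log_growth_general μ ℱ m i d hadapted hnonneg hbound hmgf
end
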